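/- arXiv:math/0401315 — 6 statements merged into one kernel-verified Lean document; each statement's English description precedes it below -/
import Mathlib

section
/- Let N ≥ 1 and identify ℝ^N with ℝ × ℝ^{N−1}. Let u : ℝ × ℝ^{N−1} → ℝ and g : ℝ × ℝ^{N−1} → ℝ be locally integrable (with respect to N-dimensional Lebesgue measure). Assume that for (N−1)-dimensional-Lebesgue almost every y ∈ ℝ^{N−1}, the function t ↦ g(t,y) is locally integrable on ℝ and u(b,y) − u(a,y) = ∫_a^b g(t,y) dt for all real numbers a ≤ b (i.e., u is absolutely continuous on the line through y parallel to the first axis, with a.e. derivative g). Then g is the weak partial derivative of u in the first coordinate direction: for every smooth compactly supported φ : ℝ × ℝ^{N−1} → ℝ, ∫_{ℝ^N} u(x) ∂₁φ(x) dx = −∫_{ℝ^N} g(x) φ(x) dx. -/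
open MeasureTheory Set

lemma key1d (g u ψ : ℝ → ℝ) (hg : LocallyIntegrable g volume)
    (hu : ∀ a b : ℝ, a ≤ b → u b - u a = ∫ t in a..b, g t)
    (hψ : ContDiff ℝ (⊤ : ℕ∞) ψ) (hψc : HasCompactSupport ψ) :
    ∫ t, u t * deriv ψ t = -∫ t, g t * ψ t := by
  obtain ⟨r, hr0, hr⟩ := hψc.isBounded.subset_closedBall_lt 0 0
  set a : ℝ := -(r + 1) with ha
  set b : ℝ := r + 1 with hb
  have hab : a ≤ b := by rw [ha, hb]; linarith
  have hsupp : tsupport ψ ⊆ Icc (-r) r := by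
    rwa [Real.closedBall_eq_Icc, zero_sub, zero_add] at hr
  have hz : ∀ t : ℝ, t ∉ Icc (-r) r → ψ t = 0 := fun t ht =>
    image_eq_zero_of_notMem_tsupport (fun h => ht (hsupp h))
  have hz' : ∀ t : ℝ, t ∉ Icc (-r) r → deriv ψ t = 0 := by
    intro t ht
    by_contra h
    exact ht (hsupp (support_deriv_subset (by simpa using h)))
  have hIccIoc : Icc (-r) r ⊆ Ioc a b := fun t ht =>
    ⟨by rw [ha]; linarith [ht.1], by rw [hb]; linarith [ht.2]⟩
  have hψa : ψ a = 0 := hz a (by intro h; rw [ha] at h; linarith [h.1])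
  have hψb : ψ b = 0 := hz b (by intro h; rw [hb] at h; linarith [h.2])
  have hdiff : Differentiable ℝ ψ := hψ.differentiable (by simp)
  have hcont : Continuous (deriv ψ) := hψ.continuous_deriv (by simp)
  set S := Ioc a b with hS
  have hgS : IntegrableOn g S volume :=
    (hg.integrableOn_isCompact isCompact_Icc).mono_set Ioc_subset_Icc_self
  have hgi : ∀ c d : ℝ, IntervalIntegrable g volume c d := fun c d =>
    (hg.integrableOn_isCompact isCompact_uIcc).intervalIntegrable
  set F : ℝ → ℝ := fun t => ∫ s in a..t, g s with hF
  have hFc : Continuous F := intervalIntegral.continuous_primitive hgi a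
  -- reduce to integrals over S
  have h1 : ∫ t, u t * deriv ψ t = ∫ t in S, u t * deriv ψ t := by
    rw [setIntegral_eq_integral_of_forall_compl_eq_zero]
    intro t ht
    rw [hz' t (fun h => ht (hIccIoc h)), mul_zero]
  have h2 : ∫ t, g t * ψ t = ∫ t in S, g t * ψ t := by
    rw [setIntegral_eq_integral_of_forall_compl_eq_zero]
    intro t ht
    rw [hz t (fun h => ht (hIccIoc h)), mul_zero]
  -- FTC for ψ
  have hderint : ∀ c d : ℝ, ∫ t in c..d, deriv ψ t = ψ d - ψ c := fun c d =>
    intervalIntegral.integral_deriv_eq_sub (fun x _ => hdiff x)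
      (hcont.intervalIntegrable c d)
  -- replace u by its representation
  have h3 : ∫ t in S, u t * deriv ψ t
      = ∫ t in S, (u a * deriv ψ t + F t * deriv ψ t) := by
    apply setIntegral_congr_fun measurableSet_Ioc
    intro t ht
    have h : u t = u a + F t := by
      have := hu a t ht.1.le
      rw [hF]; dsimp only; linarith
    show u t * deriv ψ t = u a * deriv ψ t + F t * deriv ψ t
    rw [h, add_mul]
  have i1 : IntegrableOn (fun t => u a * deriv ψ t) S volume :=
    (continuous_const.mul hcont).integrableOn_Ioc
  have i2 : IntegrableOn (fun t => F t * deriv ψ t) S volume :=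
    (hFc.mul hcont).integrableOn_Ioc
  have h4 : ∫ t in S, (u a * deriv ψ t + F t * deriv ψ t)
      = (∫ t in S, u a * deriv ψ t) + ∫ t in S, F t * deriv ψ t :=
    integral_add i1 i2
  have h5 : ∫ t in S, u a * deriv ψ t = 0 := by
    rw [integral_const_mul, hS, ← intervalIntegral.integral_of_le hab, hderint,
      hψa, hψb, sub_zero, mul_zero]
  -- main term via Fubini
  set H : ℝ → ℝ → ℝ := fun t s =>
    {p : ℝ × ℝ | p.2 ≤ p.1}.indicator (fun p => deriv ψ p.1 * g p.2) (t, s) with hH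
  have hHunc : Function.uncurry H
      = {p : ℝ × ℝ | p.2 ≤ p.1}.indicator (fun p => deriv ψ p.1 * g p.2) := rfl
  have hHint : Integrable (Function.uncurry H)
      ((volume.restrict S).prod (volume.restrict S)) := by
    rw [hHunc]
    exact (Integrable.mul_prod hcont.integrableOn_Ioc hgS).indicator
      (measurableSet_le measurable_snd measurable_fst)
  have h6 : ∫ t in S, F t * deriv ψ t = ∫ t in S, ∫ s in S, H t s := by
    apply setIntegral_congr_fun measurableSet_Ioc
    intro t ht
    have hFt : F t = ∫ s in S, (Iic t).indicator g s := by
      rw [hF]; dsimp only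
      rw [intervalIntegral.integral_of_le ht.1.le, setIntegral_indicator measurableSet_Iic,
        hS, Ioc_inter_Iic, min_eq_right ht.2]
    show F t * deriv ψ t = ∫ s in S, H t s
    rw [hFt, ← integral_mul_const]
    apply setIntegral_congr_fun measurableSet_Ioc
    intro s _
    show (Iic t).indicator g s * deriv ψ t = H t s
    by_cases h : s ≤ t <;> simp [hH, Set.indicator, h, mul_comm]
  have h7 : ∫ t in S, ∫ s in S, H t s = ∫ s in S, ∫ t in S, H t s :=
    integral_integral_swap hHint
  have h8 : ∫ s in S, ∫ t in S, H t s = ∫ s in S, (-ψ s) * g s := by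
    apply setIntegral_congr_fun measurableSet_Ioc
    intro s hs
    show (∫ t in S, H t s) = -ψ s * g s
    have hinner : ∀ t : ℝ, H t s = (Ici s).indicator (deriv ψ) t * g s := by
      intro t
      by_cases h : s ≤ t <;> simp [hH, Set.indicator, h]
    simp_rw [hinner]
    rw [integral_mul_const, setIntegral_indicator measurableSet_Ici]
    have : S ∩ Ici s = Icc s b := by
      ext t
      simp only [hS, mem_inter_iff, mem_Ioc, mem_Ici, mem_Icc]
      constructor
      · rintro ⟨⟨_, h2⟩, h3⟩; exact ⟨h3, h2⟩
      · rintro ⟨h1', h2⟩; exact ⟨⟨lt_of_lt_of_le hs.1 h1', h2⟩, h1'⟩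
    rw [this, integral_Icc_eq_integral_Ioc, ← intervalIntegral.integral_of_le hs.2,
      hderint, hψb, zero_sub]
  have h9 : ∫ s in S, (-ψ s) * g s = -∫ s in S, g s * ψ s := by
    rw [← integral_neg]
    congr 1; ext s; ring
  rw [h1, h3, h4, h5, zero_add, h6, h7, h8, h9, h2]


/-- Theorem 1.5: absolute continuity on almost all lines in the first coordinate
direction, with a.e. derivative `g`, makes `g` the weak partial derivative of `u`. -/
theorem weak_derivative_of_ae_lines_absolutelyContinuous
    (N : ℕ) (hN : 1 ≤ N)
    (u g : ℝ × (Fin (N - 1) → ℝ) → ℝ)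
    (hu : LocallyIntegrable u volume)
    (hg : LocallyIntegrable g volume)
    (hline : ∀ᵐ y : Fin (N - 1) → ℝ,
      LocallyIntegrable (fun t : ℝ => g (t, y)) volume ∧
      ∀ a b : ℝ, a ≤ b → u (b, y) - u (a, y) = ∫ t in a..b, g (t, y)) :
    ∀ φ : ℝ × (Fin (N - 1) → ℝ) → ℝ, ContDiff ℝ (⊤ : ℕ∞) φ → HasCompactSupport φ →
      ∫ x, u x * fderiv ℝ φ x (1, 0) = -∫ x, g x * φ x := by
  intro φ hφ hφc
  set D : ℝ × (Fin (N - 1) → ℝ) → ℝ := fun x => fderiv ℝ φ x (1, 0) with hD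
  have hφd : Differentiable ℝ φ := hφ.differentiable (by simp)
  have hfc : Continuous (fderiv ℝ φ) := ((hφ.fderiv_right (m := (⊤ : ℕ∞)) (by simp)).continuous)
  have hDc : Continuous D := hfc.clm_apply continuous_const
  have hDsupp : HasCompactSupport D := by
    have := hφc.fderiv ℝ
    exact this.comp_left (g := fun L : (ℝ × (Fin (N - 1) → ℝ)) →L[ℝ] ℝ => L (1, 0)) rfl
  have hint1 : Integrable (fun x => u x * D x) volume := by
    simpa [smul_eq_mul] using hu.integrable_smul_right_of_hasCompactSupport hDc hDsupp
  have hint2 : Integrable (fun x => g x * φ x) volume := by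
    simpa [smul_eq_mul] using hg.integrable_smul_right_of_hasCompactSupport hφ.continuous hφc
  have hvol : (volume : Measure (ℝ × (Fin (N - 1) → ℝ)))
      = (volume : Measure ℝ).prod volume := Measure.volume_eq_prod _ _
  have hint1' : Integrable (fun x => u x * D x) ((volume : Measure ℝ).prod volume) := by
    rwa [← hvol]
  have hint2' : Integrable (fun x => g x * φ x) ((volume : Measure ℝ).prod volume) := by
    rwa [← hvol]
  calc ∫ x, u x * D x
      = ∫ y, ∫ t, u (t, y) * D (t, y) := by
        rw [hvol]; exact integral_prod_symm _ hint1'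
    _ = ∫ y, -∫ t, g (t, y) * φ (t, y) := by
        apply integral_congr_ae
        filter_upwards [hline] with y hy
        have hψ : ContDiff ℝ (⊤ : ℕ∞) (fun t => φ (t, y)) :=
          hφ.comp (contDiff_id.prodMk contDiff_const)
        have hψc : HasCompactSupport (fun t : ℝ => φ (t, y)) := by
          apply HasCompactSupport.intro (hφc.image continuous_fst)
          intro t ht
          by_contra h
          exact ht ⟨(t, y), subset_tsupport _ h, rfl⟩
        have hder : ∀ t : ℝ, deriv (fun t => φ (t, y)) t = D (t, y) := by
          intro t
          have h1 : HasDerivAt (fun t : ℝ => (t, y)) ((1 : ℝ), (0 : Fin (N - 1) → ℝ)) t :=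
            (hasDerivAt_id t).prodMk (hasDerivAt_const t y)
          have h2 : HasDerivAt (fun t => φ (t, y)) (fderiv ℝ φ (t, y) (1, 0)) t :=
            (hφd (t, y)).hasFDerivAt.comp_hasDerivAt t h1
          exact h2.deriv
        have := key1d (fun t => g (t, y)) (fun t => u (t, y)) (fun t => φ (t, y))
          hy.1 hy.2 hψ hψc
        simp only [hder] at this
        exact this
    _ = -∫ y, ∫ t, g (t, y) * φ (t, y) := integral_neg _
    _ = -∫ x, g x * φ x := by
        rw [hvol]; rw [integral_prod_symm _ hint2']
end

section
/- Let N ≥ 1, identify ℝ^N with ℝ × ℝ^{N−1}, and let S ⊆ ℝ^N be a closed set of N-dimensional Lebesgue measure zero. Let u : ℝ^N → ℝ be continuous and let g : ℝ^N → ℝ be locally integrable. Assume that for (N−1)-dimensional-Lebesgue almost every y ∈ ℝ^{N−1}: (i) the set {t ∈ ℝ : (t,y) ∈ S} is at most countable; and (ii) t ↦ g(t,y) is locally integrable and u(b,y) − u(a,y) = ∫_a^b g(t,y) dt for all a ≤ b such that the segment {(t,y) : t ∈ [a,b]} is disjoint from S. Then g is the weak partial derivative of u in the first coordinate direction on all of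 ℝ^N: ∫_{ℝ^N} u ∂₁φ dx = −∫_{ℝ^N} g φ dx for every smooth compactly supported φ : ℝ^N → ℝ. -/
open MeasureTheory

open Set Topology Filter in

lemma constant_off_countable {T : Set ℝ} (hTcl : IsClosed T) (hTc : T.Countable)
    {h : ℝ → ℝ} (hc : Continuous h)
    (hconst : ∀ a b : ℝ, a ≤ b → (∀ t ∈ Set.Icc a b, t ∉ T) → h a = h b) :
    ∀ a b : ℝ, h a = h b := by
  -- reduce to a ≤ b
  have key : ∀ a b : ℝ, a ≤ b → h a = h b := by
    intro a b hab
    -- every value on [a,b] is attained on the countable set insert a (T ∩ Icc a b)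
    have himg : h '' Icc a b ⊆ h '' (insert a (T ∩ Icc a b)) := by
      rintro - ⟨x, hx, rfl⟩
      set A : Set ℝ := insert a (T ∩ Icc a x) with hA
      have hAne : A.Nonempty := ⟨a, Or.inl rfl⟩
      have hAbdd : BddAbove A := by
        refine ⟨x, ?_⟩
        rintro t (rfl | ht)
        · exact hx.1
        · exact ht.2.2
      have hAcl : IsClosed A := by
        rw [hA, Set.insert_eq]
        exact isClosed_singleton.union (hTcl.inter isClosed_Icc)
      set c := sSup A with hc'
      have hcA : c ∈ A := hAcl.csSup_mem hAne hAbdd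
      have hcx : c ≤ x := csSup_le hAne (by rintro t (rfl | ht); exacts [hx.1, ht.2.2])
      have hhcx : h c = h x := by
        rcases eq_or_lt_of_le hcx with heq | hlt
        · rw [heq]
        · -- on (c, x], h is constantly h x
          have hval : ∀ s ∈ Ioc c x, h s = h x := by
            intro s hs
            refine hconst s x hs.2 ?_
            intro t ht htT
            have : t ∈ A := Or.inr ⟨htT, ⟨(le_csSup hAbdd (Or.inl rfl)).trans (hs.1.le.trans ht.1), ht.2⟩⟩
            have : t ≤ c := le_csSup hAbdd this
            linarith [ht.1, hs.1]
          haveI hne : (nhdsWithin c (Ioc c x)).NeBot := left_nhdsWithin_Ioc_neBot hlt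
          have t1 : Filter.Tendsto h (nhdsWithin c (Ioc c x)) (nhds (h c)) :=
            (hc.continuousAt.continuousWithinAt).tendsto
          have t2 : Filter.Tendsto h (nhdsWithin c (Ioc c x)) (nhds (h x)) := by
            refine Filter.Tendsto.congr' ?_ tendsto_const_nhds
            filter_upwards [self_mem_nhdsWithin] with s hs using (hval s hs).symm
          exact tendsto_nhds_unique t1 t2
      refine ⟨c, ?_, hhcx⟩
      rcases hcA with hceq | hcT
      · exact Or.inl hceq
      · exact Or.inr ⟨hcT.1, hcT.2.1, hcT.2.2.trans hx.2⟩
    by_contra hne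
    -- IVT: the image contains a nondegenerate interval, contradicting countability
    have hcnt : (h '' Icc a b).Countable :=
      (((hTc.mono Set.inter_subset_left).insert a).image h).mono himg
    have hsub : Icc (min (h a) (h b)) (max (h a) (h b)) ⊆ h '' Icc a b := by
      rcases le_total (h a) (h b) with hle | hle
      · rw [min_eq_left hle, max_eq_right hle]
        exact intermediate_value_Icc hab hc.continuousOn
      · rw [min_eq_right hle, max_eq_left hle]
        exact intermediate_value_Icc' hab hc.continuousOn
    have h0 : volume (Icc (min (h a) (h b)) (max (h a) (h b))) = 0 :=
      measure_mono_null hsub (hcnt.measure_zero _)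
    rw [Real.volume_Icc] at h0
    have : min (h a) (h b) < max (h a) (h b) := min_lt_max.mpr hne
    simp only [ENNReal.ofReal_eq_zero, sub_nonpos] at h0
    exact absurd h0 (not_le.mpr this)
  intro a b
  rcases le_total a b with hab | hab
  · exact key a b hab
  · exact (key b a hab).symm


open Set Topology Filter in
lemma ftc_global {T : Set ℝ} (hTcl : IsClosed T) (hTc : T.Countable)
    {u g : ℝ → ℝ} (hu : Continuous u) (hg : LocallyIntegrable g volume)
    (hftc : ∀ a b : ℝ, a ≤ b → (∀ t ∈ Set.Icc a b, t ∉ T) →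
      u b - u a = ∫ t in a..b, g t) :
    ∀ a b : ℝ, a ≤ b → u b - u a = ∫ t in a..b, g t := by
  have hint : ∀ a b : ℝ, IntervalIntegrable g volume a b := fun a b =>
    (hg.integrableOn_isCompact isCompact_uIcc).mono_set Set.uIoc_subset_uIcc
      |> intervalIntegrable_iff.mpr
  set h : ℝ → ℝ := fun x => u x - ∫ t in (0:ℝ)..x, g t with hh
  have hhc : Continuous h :=
    hu.sub (intervalIntegral.continuous_primitive hint 0)
  have hconst : ∀ a b : ℝ, a ≤ b → (∀ t ∈ Set.Icc a b, t ∉ T) → h a = h b := by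
    intro a b hab hfree
    have h1 := hftc a b hab hfree
    have h2 : (∫ t in (0:ℝ)..b, g t) - ∫ t in (0:ℝ)..a, g t = ∫ t in a..b, g t :=
      intervalIntegral.integral_interval_sub_left (hint 0 b) (hint 0 a)
    simp only [hh]
    linarith
  intro a b hab
  have := constant_off_countable hTcl hTc hhc hconst a b
  have h2 : (∫ t in (0:ℝ)..b, g t) - ∫ t in (0:ℝ)..a, g t = ∫ t in a..b, g t :=
    intervalIntegral.integral_interval_sub_left (hint 0 b) (hint 0 a)
  simp only [hh] at this
  linarith


open Set Topology Filter in
lemma parts1d {u g : ℝ → ℝ} (hu : Continuous u) (hg : LocallyIntegrable g volume)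
    (hftc : ∀ a b : ℝ, a ≤ b → u b - u a = ∫ t in a..b, g t)
    {ψ ψ' : ℝ → ℝ} (hψd : ∀ t, HasDerivAt ψ (ψ' t) t) (hψ'c : Continuous ψ')
    (hψs : HasCompactSupport ψ) :
    ∫ t, u t * ψ' t = -∫ t, g t * ψ t := by
  have hψc : Continuous ψ := continuous_iff_continuousAt.2 fun t => (hψd t).continuousAt
  have hint : ∀ a b : ℝ, IntervalIntegrable g volume a b := fun a b =>
    intervalIntegrable_iff.mpr
      ((hg.integrableOn_isCompact isCompact_uIcc).mono_set Set.uIoc_subset_uIcc)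
  -- choose a bounding interval
  obtain ⟨R₀, hR₀⟩ := (hψs.isBounded).subset_closedBall 0
  rw [Real.closedBall_eq_Icc, zero_sub, zero_add] at hR₀
  set R : ℝ := max R₀ 0 with hRdef
  have hR : tsupport ψ ⊆ Set.Icc (-R) R :=
    hR₀.trans (Set.Icc_subset_Icc (by simp [hRdef]) (le_max_left _ _))
  set A : ℝ := -R - 1 with hA
  set B : ℝ := R + 1 with hB
  have hR0 : (0:ℝ) ≤ R := le_max_right _ _
  have hAB : A ≤ B := by simp only [hA, hB]; linarith
  -- vanishing facts
  have hmem : ∀ t : ℝ, t ∉ Set.Ioc A B → t ∉ tsupport ψ := by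
    intro t ht hts
    have := hR hts
    simp only [Set.mem_Icc] at this
    simp only [Set.mem_Ioc, hA, hB, not_and_or, not_lt, not_le] at ht
    rcases ht with h | h <;> linarith [this.1, this.2]
  have hψ0 : ∀ t : ℝ, t ∉ Set.Ioc A B → ψ t = 0 := fun t ht =>
    image_eq_zero_of_notMem_tsupport (hmem t ht)
  have hψ'0 : ∀ t : ℝ, t ∉ Set.Ioc A B → ψ' t = 0 := by
    intro t ht
    rw [← (hψd t).deriv]
    by_contra hne
    exact hmem t ht (support_deriv_subset hne)
  have hψA : ψ A = 0 := hψ0 A (by simp [Set.mem_Ioc])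
  have hψB : ψ B = 0 := by
    refine image_eq_zero_of_notMem_tsupport fun hts => ?_
    have := hR hts
    simp only [Set.mem_Icc, hB] at this
    linarith [this.2]
  -- primitive
  set P : ℝ → ℝ := fun t => ∫ s in A..t, g s with hPdef
  have hPc : Continuous P := intervalIntegral.continuous_primitive hint A
  have hU : ∀ t ∈ Set.Ioc A B, u t = u A + P t := by
    intro t ht
    have := hftc A t ht.1.le
    simp only [hPdef]; linarith
  -- reduce integrals to Ioc A B
  have step1 : ∫ t, u t * ψ' t = ∫ t in Set.Ioc A B, u t * ψ' t :=
    (setIntegral_eq_integral_of_forall_compl_eq_zero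
      (fun t ht => by rw [hψ'0 t ht, mul_zero])).symm
  have stepg : ∫ t, g t * ψ t = ∫ t in Set.Ioc A B, g t * ψ t :=
    (setIntegral_eq_integral_of_forall_compl_eq_zero
      (fun t ht => by rw [hψ0 t ht, mul_zero])).symm
  have hgint : IntegrableOn g (Set.Ioc A B) volume :=
    (hg.integrableOn_isCompact isCompact_Icc).mono_set Set.Ioc_subset_Icc_self
  have hψ'int : IntegrableOn ψ' (Set.Ioc A B) volume := hψ'c.integrableOn_Ioc
  -- the Fubini kernel
  set F : ℝ × ℝ → ℝ :=
    {q : ℝ × ℝ | q.2 ≤ q.1}.indicator (fun q => ψ' q.1 * g q.2) with hFdef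
  set μ : Measure ℝ := volume.restrict (Set.Ioc A B) with hμ
  have hmeas : MeasurableSet {q : ℝ × ℝ | q.2 ≤ q.1} :=
    (isClosed_le continuous_snd continuous_fst).measurableSet
  have hFi : Integrable F (μ.prod μ) :=
    (Integrable.mul_prod (L := ℝ) hψ'int hgint).indicator hmeas
  have hFind : ∀ t s : ℝ, F (t, s) = (Set.Iic t).indicator (fun s => ψ' t * g s) s := by
    intro t s
    simp only [hFdef, Set.indicator_apply, Set.mem_setOf_eq, Set.mem_Iic]
  have hFind' : ∀ t s : ℝ, F (t, s) = (Set.Ici s).indicator (fun t => ψ' t * g s) t := by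
    intro t s
    simp only [hFdef, Set.indicator_apply, Set.mem_setOf_eq, Set.mem_Ici]
  -- inner integral in s
  have E1 : ∀ t ∈ Set.Ioc A B, (∫ s, F (t, s) ∂μ) = P t * ψ' t := by
    intro t ht
    simp only [hμ]
    calc ∫ s in Set.Ioc A B, F (t, s)
        = ∫ s in Set.Ioc A B, (Set.Iic t).indicator (fun s => ψ' t * g s) s := by
          exact setIntegral_congr_fun measurableSet_Ioc fun s _ => hFind t s
      _ = ∫ s in Set.Ioc A B ∩ Set.Iic t, ψ' t * g s := by
          rw [setIntegral_indicator measurableSet_Iic]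
      _ = ∫ s in Set.Ioc A t, ψ' t * g s := by
          rw [Set.Ioc_inter_Iic, min_eq_right ht.2]
      _ = ψ' t * ∫ s in Set.Ioc A t, g s := integral_const_mul _ _
      _ = ψ' t * P t := by
          simp only [hPdef]
          rw [intervalIntegral.integral_of_le ht.1.le]
      _ = P t * ψ' t := mul_comm _ _
  -- inner integral in t
  have E2 : ∀ s ∈ Set.Ioc A B, (∫ t, F (t, s) ∂μ) = -(g s * ψ s) := by
    intro s hs
    have hset : Set.Ioc A B ∩ Set.Ici s = Set.Icc s B := by
      ext t
      simp only [Set.mem_inter_iff, Set.mem_Ioc, Set.mem_Ici, Set.mem_Icc]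
      constructor
      · rintro ⟨⟨_, h2⟩, h3⟩; exact ⟨h3, h2⟩
      · rintro ⟨h1, h2⟩; exact ⟨⟨lt_of_lt_of_le hs.1 h1, h2⟩, h1⟩
    simp only [hμ]
    calc ∫ t in Set.Ioc A B, F (t, s)
        = ∫ t in Set.Ioc A B, (Set.Ici s).indicator (fun t => ψ' t * g s) t :=
          setIntegral_congr_fun measurableSet_Ioc fun t _ => hFind' t s
      _ = ∫ t in Set.Ioc A B ∩ Set.Ici s, ψ' t * g s := by
          rw [setIntegral_indicator measurableSet_Ici]
      _ = ∫ t in Set.Icc s B, ψ' t * g s := by rw [hset]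
      _ = ∫ t in Set.Ioc s B, ψ' t * g s := integral_Icc_eq_integral_Ioc
      _ = (∫ t in Set.Ioc s B, ψ' t) * g s := integral_mul_const _ _
      _ = (∫ t in s..B, ψ' t) * g s := by
          rw [intervalIntegral.integral_of_le hs.2]
      _ = (ψ B - ψ s) * g s := by
          rw [intervalIntegral.integral_eq_sub_of_hasDerivAt (fun t _ => hψd t)
            (hψ'c.intervalIntegrable s B)]
      _ = -(g s * ψ s) := by rw [hψB]; ring
  -- Fubini
  have hswap : ∫ t, (∫ s, F (t, s) ∂μ) ∂μ = ∫ s, (∫ t, F (t, s) ∂μ) ∂μ := by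
    rw [← integral_prod F hFi, ← integral_prod_symm F hFi]
  have lhs_eq : ∫ t, (∫ s, F (t, s) ∂μ) ∂μ = ∫ t in Set.Ioc A B, P t * ψ' t := by
    simp only [hμ]
    exact setIntegral_congr_fun measurableSet_Ioc fun t ht => E1 t ht
  have rhs_eq : ∫ s, (∫ t, F (t, s) ∂μ) ∂μ = -∫ s in Set.Ioc A B, g s * ψ s := by
    simp only [hμ]
    rw [← integral_neg]
    exact setIntegral_congr_fun measurableSet_Ioc fun s hs => by rw [E2 s hs]
  have key2 : ∫ t in Set.Ioc A B, P t * ψ' t = -∫ s in Set.Ioc A B, g s * ψ s := by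
    rw [← lhs_eq, hswap, rhs_eq]
  -- assemble
  have split : ∫ t in Set.Ioc A B, u t * ψ' t
      = (∫ t in Set.Ioc A B, u A * ψ' t) + ∫ t in Set.Ioc A B, P t * ψ' t := by
    rw [← integral_add (f := fun t => u A * ψ' t) (g := fun t => P t * ψ' t) ((continuous_const.mul hψ'c).integrableOn_Ioc)
      ((hPc.mul hψ'c).integrableOn_Ioc)]
    exact setIntegral_congr_fun measurableSet_Ioc fun t ht => by rw [hU t ht]; ring
  have first0 : (∫ t in Set.Ioc A B, u A * ψ' t) = 0 := by
    rw [integral_const_mul, ← intervalIntegral.integral_of_le hAB,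
      intervalIntegral.integral_eq_sub_of_hasDerivAt (fun t _ => hψd t)
        (hψ'c.intervalIntegrable A B), hψB, hψA, sub_zero, mul_zero]
  rw [step1, stepg, split, first0, zero_add, key2]


open Topology Filter in
/-- Removability with respect to first order PDO:s: if a.e. line in the first
coordinate direction meets the closed null set `S` at most countably, then a
partial derivative that exists (in the absolutely-continuous sense) off `S`
is a global weak partial derivative. -/
theorem removable_weak_derivative_of_countable_line_intersections
    (N : ℕ) (hN : 1 ≤ N)
    (S : Set (ℝ × (Fin (N - 1) → ℝ))) (hS : IsClosed S) (hS0 : volume S = 0)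
    (u g : ℝ × (Fin (N - 1) → ℝ) → ℝ)
    (hu : Continuous u)
    (hg : LocallyIntegrable g volume)
    (hline : ∀ᵐ y : Fin (N - 1) → ℝ,
      {t : ℝ | (t, y) ∈ S}.Countable ∧
      LocallyIntegrable (fun t : ℝ => g (t, y)) volume ∧
      ∀ a b : ℝ, a ≤ b → (∀ t ∈ Set.Icc a b, (t, y) ∉ S) →
        u (b, y) - u (a, y) = ∫ t in a..b, g (t, y)) :
    ∀ φ : ℝ × (Fin (N - 1) → ℝ) → ℝ, ContDiff ℝ (⊤ : ℕ∞) φ → HasCompactSupport φ →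
      ∫ x, u x * fderiv ℝ φ x (1, 0) = -∫ x, g x * φ x := by
  intro φ hφ hφs
  set D : ℝ × (Fin (N - 1) → ℝ) → ℝ := fun x => fderiv ℝ φ x (1, 0) with hD
  have hφc : Continuous φ := hφ.continuous
  have hDc : Continuous D :=
    (hφ.continuous_fderiv (by simp)).clm_apply continuous_const
  have hDsupp : HasCompactSupport D := by
    apply HasCompactSupport.intro (K := tsupport φ) hφs
    intro x hx
    have h0 : fderiv ℝ φ x = 0 := by
      by_contra h
      exact hx (support_fderiv_subset ℝ (Function.mem_support.2 h))
    simp only [hD, h0, ContinuousLinearMap.zero_apply]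
  have huD : Integrable (fun x => u x * D x) volume := by
    simpa [smul_eq_mul] using
      (hu.locallyIntegrable.integrable_smul_right_of_hasCompactSupport hDc hDsupp)
  have hgφ : Integrable (fun x => g x * φ x) volume := by
    simpa [smul_eq_mul] using
      (hg.integrable_smul_right_of_hasCompactSupport hφc hφs)
  -- a bound for the support of φ
  obtain ⟨R₀, hR₀⟩ := hφs.isBounded.subset_closedBall 0
  set R : ℝ := max R₀ 0 with hRdef
  have hRb : tsupport φ ⊆ Metric.closedBall 0 R :=
    hR₀.trans (Metric.closedBall_subset_closedBall (le_max_left _ _))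
  -- product structure of the measure
  have hvol : (volume : Measure (ℝ × (Fin (N - 1) → ℝ))) = (volume : Measure ℝ).prod (volume : Measure (Fin (N - 1) → ℝ)) :=
    Measure.volume_eq_prod ℝ (Fin (N - 1) → ℝ)
  have h1 : ∫ x, u x * D x = ∫ y : Fin (N - 1) → ℝ, ∫ t : ℝ, u (t, y) * D (t, y) := by
    rw [hvol]
    exact integral_prod_symm _ (by rwa [← hvol])
  have h2 : ∫ x, g x * φ x = ∫ y : Fin (N - 1) → ℝ, ∫ t : ℝ, g (t, y) * φ (t, y) := by
    rw [hvol]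
    exact integral_prod_symm _ (by rwa [← hvol])
  rw [h1, h2, ← integral_neg]
  apply integral_congr_ae
  filter_upwards [hline] with y hy
  obtain ⟨hcnt, hloc, hftcS⟩ := hy
  have hιc : Continuous fun t : ℝ => ((t, y) : ℝ × (Fin (N - 1) → ℝ)) :=
    continuous_id.prodMk continuous_const
  -- the slice of S
  have hTcl : IsClosed {t : ℝ | (t, y) ∈ S} := hS.preimage hιc
  -- global FTC along the line
  have hftc : ∀ a b : ℝ, a ≤ b → u (b, y) - u (a, y) = ∫ t in a..b, g (t, y) :=
    ftc_global hTcl hcnt (hu.comp hιc) hloc hftcS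
  -- derivative of the slice of φ
  have hψd : ∀ t : ℝ, HasDerivAt (fun t : ℝ => φ (t, y)) (D (t, y)) t := by
    intro t
    have hι : HasDerivAt (fun t : ℝ => ((t, y) : ℝ × (Fin (N - 1) → ℝ))) (1, 0) t :=
      (hasDerivAt_id t).prodMk (hasDerivAt_const t y)
    exact ((hφ.differentiable (by simp) (t, y)).hasFDerivAt).comp_hasDerivAt t hι
  have hψs : HasCompactSupport fun t : ℝ => φ (t, y) := by
    apply HasCompactSupport.intro (isCompact_Icc (a := -R) (b := R))
    intro t ht
    apply image_eq_zero_of_notMem_tsupport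
    intro hts
    have := hRb hts
    rw [Metric.mem_closedBall, dist_zero_right, Prod.norm_def] at this
    have h1 : |t| ≤ R := le_trans (le_max_left _ _) this
    simp only [Set.mem_Icc, not_and_or, not_le] at ht
    rcases ht with h | h <;> [exact absurd (neg_le.mp (abs_le.mp h1).1) (not_le.mpr (by linarith)); linarith [(abs_le.mp h1).2]]
  exact parts1d (hu.comp hιc) hloc hftc hψd (hDc.comp hιc) hψs
end

section
/- Let f : ℝ → ℝ be continuous, let g : ℝ → ℝ be locally integrable, and let C ⊆ ℝ be a closed, at most countable set. Suppose that f(b) − f(a) = ∫_a^b g(t) dt for all real a ≤ b with [a,b] ∩ C = ∅. Then f(b) − f(a) = ∫_a^b g(t) dt for all real a ≤ b. -/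
open MeasureTheory

/-- One-dimensional removability lemma: a continuous function satisfying the
fundamental theorem of calculus with locally integrable derivative `g` on every
compact interval avoiding a closed countable set `C` satisfies it on every
compact interval. -/
theorem ftc_across_closed_countable_set
    (f g : ℝ → ℝ) (hf : Continuous f) (hg : LocallyIntegrable g volume)
    (C : Set ℝ) (hC : IsClosed C) (hCc : C.Countable)
    (h : ∀ a b : ℝ, a ≤ b → Set.Icc a b ∩ C = ∅ → f b - f a = ∫ t in a..b, g t) :
    ∀ a b : ℝ, a ≤ b → f b - f a = ∫ t in a..b, g t := by
  intro a b hab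
  have hint : ∀ u v : ℝ, IntervalIntegrable g volume u v := fun u v =>
    (hg.integrableOn_isCompact isCompact_uIcc).intervalIntegrable
  set F : ℝ → ℝ := fun x => f x - ∫ t in a..x, g t with hFdef
  have hFc : Continuous F := hf.sub (intervalIntegral.continuous_primitive hint a)
  have key : ∀ x y : ℝ, x ≤ y → Set.Icc x y ∩ C = ∅ → F x = F y := by
    intro x y hxy hempty
    have h1 := h x y hxy hempty
    have h2 : (∫ t in a..y, g t) - ∫ t in a..x, g t = ∫ t in x..y, g t :=
      intervalIntegral.integral_interval_sub_left (hint a y) (hint a x)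
    simp only [hFdef]
    linarith
  -- F takes countably many values
  have himg : F '' Set.univ ⊆ F '' (C ∪ Set.range ((↑) : ℚ → ℝ)) := by
    rintro _ ⟨x, -, rfl⟩
    by_cases hx : x ∈ C
    · exact ⟨x, Or.inl hx, rfl⟩
    · have hxU : x ∈ Cᶜ := hx
      have hopen : IsOpen (connectedComponentIn Cᶜ x) :=
        hC.isOpen_compl.connectedComponentIn
      have hne : (connectedComponentIn Cᶜ x).Nonempty :=
        ⟨x, mem_connectedComponentIn hxU⟩
      obtain ⟨q, hrmem⟩ :=
        Rat.denseRange_cast.exists_mem_open hopen hne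
      refine ⟨(q : ℝ), Or.inr ⟨q, rfl⟩, ?_⟩
      have hord : Set.OrdConnected (connectedComponentIn Cᶜ x) :=
        (isPreconnected_connectedComponentIn).ordConnected
      have hsub : Set.uIcc x (q : ℝ) ⊆ Cᶜ :=
        (hord.uIcc_subset (mem_connectedComponentIn hxU) hrmem).trans
          (connectedComponentIn_subset _ _)
      have hempty : Set.Icc (min x (q : ℝ)) (max x (q : ℝ)) ∩ C = ∅ := by
        rw [Set.eq_empty_iff_forall_notMem]
        rintro t ⟨ht1, ht2⟩
        exact hsub (by simpa [Set.uIcc] using Set.mem_Icc.mpr ⟨ht1.1, ht1.2⟩) ht2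
      rcases le_total x (q : ℝ) with hxy | hxy
      · exact ((key x q hxy (by simpa [min_eq_left hxy, max_eq_right hxy] using hempty))).symm
      · exact key q x hxy (by simpa [min_eq_right hxy, max_eq_left hxy] using hempty)
  have hcnt : (F '' Set.univ).Countable :=
    ((hCc.union (Set.countable_range _)).image F).mono himg
  -- The image is connected; countable connected sets are subsingletons
  have hconn : IsPreconnected (F '' Set.univ) :=
    (isPreconnected_univ).image F hFc.continuousOn
  have hsub : (F '' Set.univ).Subsingleton := by
    by_contra hns
    rw [Set.not_subsingleton_iff] at hns
    obtain ⟨u, hu, v, hv, huv⟩ := hns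
    wlog hlt : u < v generalizing u v
    · exact this v hv u hu huv.symm (lt_of_le_of_ne (not_lt.mp hlt) huv.symm)
    have hIcc : Set.Icc u v ⊆ F '' Set.univ :=
      hconn.ordConnected.out hu hv
    have : (Set.Icc u v).Countable := hcnt.mono hIcc
    have hμ : volume (Set.Icc u v) = 0 := this.measure_zero _
    rw [Real.volume_Icc] at hμ
    simp only [ENNReal.ofReal_eq_zero] at hμ
    linarith
  have := hsub ⟨a, Set.mem_univ a, rfl⟩ ⟨b, Set.mem_univ b, rfl⟩
  have hFa : F a = f a := by simp [hFdef]
  have hFb : F b = f b - ∫ t in a..b, g t := rfl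
  rw [hFa, hFb] at this
  linarith
end

section
/- Let f : ℝ → ℝ be continuous and not constant. Then the set of points x ∈ ℝ at which f is not locally constant (i.e., the set of x such that f is nonconstant on every open neighborhood of x) is uncountable. Equivalently: if f : ℝ → ℝ is continuous and the set of points at which f is not locally constant is at most countable, then f is constant. -/
open Set

/-- A nonconstant continuous function on the line has an uncountable set of
points of non-local-constancy (the set of points `x` such that `f` is
nonconstant on every open neighborhood of `x`). -/
theorem uncountable_nonlocallyConstant_set_of_continuous_nonconstant
    (f : ℝ → ℝ) (hf : Continuous f) (hnc : ¬ ∃ c : ℝ, ∀ x : ℝ, f x = c) :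
    ¬ {x : ℝ | ∀ U : Set ℝ, IsOpen U → x ∈ U →
        ∃ a ∈ U, ∃ b ∈ U, f a ≠ f b}.Countable := by
  intro hS
  set S : Set ℝ := {x : ℝ | ∀ U : Set ℝ, IsOpen U → x ∈ U →
        ∃ a ∈ U, ∃ b ∈ U, f a ≠ f b} with hSdef
  -- characterize complement
  have hmem : ∀ x : ℝ, x ∉ S ↔ ∃ U : Set ℝ, IsOpen U ∧ x ∈ U ∧ ∀ a ∈ U, ∀ b ∈ U, f a = f b := by
    intro x
    simp only [hSdef, mem_setOf_eq]
    push_neg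
    tauto
  -- Sᶜ is open
  have hScopen : IsOpen Sᶜ := by
    rw [isOpen_iff_forall_mem_open]
    intro x hx
    obtain ⟨U, hU, hxU, hconst⟩ := (hmem x).1 hx
    exact ⟨U, fun y hy => (hmem y).2 ⟨U, hU, hy, hconst⟩, hU, hxU⟩
  have hSclosed : IsClosed S := by simpa using hScopen.isClosed_compl
  -- the restriction of f to Sᶜ is locally constant
  have hlc : IsLocallyConstant (fun y : ↥Sᶜ => f (y : ℝ)) := by
    rw [IsLocallyConstant.iff_exists_open]
    rintro ⟨x, hx⟩
    obtain ⟨U, hU, hxU, hconst⟩ := (hmem x).1 hx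
    exact ⟨Subtype.val ⁻¹' U, hU.preimage continuous_subtype_val, hxU,
      fun y hy => hconst y hy x hxU⟩
  -- f is constant on any preconnected subset of Sᶜ
  have hconst_on : ∀ (t : Set ℝ), IsPreconnected t → t ⊆ Sᶜ →
      ∀ x ∈ t, ∀ y ∈ t, f x = f y := by
    intro t ht hts x hx y hy
    have : IsPreconnected ((Subtype.val : ↥Sᶜ → ℝ) ⁻¹' t) := by
      rw [← Topology.IsInducing.subtypeVal.isPreconnected_image]
      rwa [Subtype.image_preimage_coe, inter_eq_self_of_subset_right hts]
    exact hlc.apply_eq_of_isPreconnected this (x := ⟨x, hts hx⟩) (y := ⟨y, hts hy⟩)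
      hx hy
  -- every value of f is attained on S
  have hrange : range f ⊆ f '' S := by
    -- S is nonempty: otherwise f is locally constant on ℝ, hence constant
    have hSne : S.Nonempty := by
      by_contra h
      rw [not_nonempty_iff_eq_empty] at h
      apply hnc
      refine ⟨f 0, fun x => ?_⟩
      exact hconst_on univ isPreconnected_univ (by simp [h]) x trivial 0 trivial
    rintro _ ⟨x, rfl⟩
    by_cases hx : x ∈ S
    · exact ⟨x, hx, rfl⟩
    obtain ⟨s, hs⟩ := hSne
    rcases le_total x s with hxs | hsx
    · -- take the infimum of S ∩ Ici x
      have hne : (S ∩ Ici x).Nonempty := ⟨s, hs, hxs⟩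
      have hbdd : BddBelow (S ∩ Ici x) := ⟨x, fun y hy => hy.2⟩
      set a := sInf (S ∩ Ici x) with ha
      have hamem : a ∈ S ∩ Ici x :=
        (hSclosed.inter isClosed_Ici).csInf_mem hne hbdd
      have hxa : x < a := lt_of_le_of_ne hamem.2
        (fun h => hx (h ▸ hamem.1))
      have hIco : Ico x a ⊆ Sᶜ := by
        intro y hy hyS
        exact absurd (csInf_le hbdd ⟨hyS, hy.1⟩) (not_le.2 hy.2)
      have hconstIco : ∀ y ∈ Ico x a, f y = f x :=
        fun y hy => hconst_on _ isPreconnected_Ico hIco y hy x ⟨le_refl x, hxa⟩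
      -- f a = f x by continuity
      have : a ∈ {y | f y = f x} := by
        have hcl : IsClosed {y : ℝ | f y = f x} := isClosed_eq hf continuous_const
        have : closure (Ico x a) ⊆ {y | f y = f x} :=
          hcl.closure_subset_iff.2 hconstIco
        exact this (by rw [closure_Ico hxa.ne]; exact ⟨hxa.le, le_refl a⟩)
      exact ⟨a, hamem.1, this⟩
    · -- symmetric: supremum of S ∩ Iic x
      have hne : (S ∩ Iic x).Nonempty := ⟨s, hs, hsx⟩
      have hbdd : BddAbove (S ∩ Iic x) := ⟨x, fun y hy => hy.2⟩
      set a := sSup (S ∩ Iic x) with ha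
      have hamem : a ∈ S ∩ Iic x :=
        (hSclosed.inter isClosed_Iic).csSup_mem hne hbdd
      have hxa : a < x := lt_of_le_of_ne hamem.2
        (fun h => hx (h ▸ hamem.1))
      have hIoc : Ioc a x ⊆ Sᶜ := by
        intro y hy hyS
        exact absurd (le_csSup hbdd ⟨hyS, hy.2⟩) (not_le.2 hy.1)
      have hconstIoc : ∀ y ∈ Ioc a x, f y = f x :=
        fun y hy => hconst_on _ isPreconnected_Ioc hIoc y hy x ⟨hxa, le_refl x⟩
      have : a ∈ {y | f y = f x} := by
        have hcl : IsClosed {y : ℝ | f y = f x} := isClosed_eq hf continuous_const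
        have : closure (Ioc a x) ⊆ {y | f y = f x} :=
          hcl.closure_subset_iff.2 hconstIoc
        exact this (by rw [closure_Ioc hxa.ne]; exact ⟨le_refl a, hxa.le⟩)
      exact ⟨a, hamem.1, this⟩
  -- hence the range of f is countable
  have hrc : (range f).Countable := (hS.image f).mono hrange
  -- but f is nonconstant, so by IVT the range contains a nontrivial interval
  push_neg at hnc
  obtain ⟨b, hb⟩ := hnc (f 0)
  have hlt : min (f 0) (f b) < max (f 0) (f b) := min_lt_max.2 (Ne.symm hb)
  have hsub : Icc (min (f 0) (f b)) (max (f 0) (f b)) ⊆ range f := by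
    rcases le_total (f 0) (f b) with h | h
    · simpa [min_eq_left h, max_eq_right h] using intermediate_value_univ 0 b hf
    · simpa [min_eq_right h, max_eq_left h] using intermediate_value_univ b 0 hf
  have : (Icc (min (f 0) (f b)) (max (f 0) (f b))).Countable := hrc.mono hsub
  have hcard := Cardinal.mk_Icc_real hlt
  rw [Set.countable_iff_exists_injective] at this
  -- derive contradiction from cardinality
  have : (Icc (min (f 0) (f b)) (max (f 0) (f b)) : Set ℝ).Countable := hrc.mono hsub
  have h1 : (Cardinal.mk ↥(Icc (min (f 0) (f b)) (max (f 0) (f b)))) ≤ Cardinal.aleph0 :=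
    this.le_aleph0
  rw [hcard] at h1
  exact absurd h1 (not_le.2 Cardinal.aleph0_lt_continuum)
end

section
/- Let S ⊆ ℂ be a closed set of two-dimensional Lebesgue (area) measure zero such that for Lebesgue-almost every b ∈ ℝ the set {t ∈ ℝ : t + b·i ∈ S} is at most countable, and for Lebesgue-almost every a ∈ ℝ the set {t ∈ ℝ : a + t·i ∈ S} is at most countable. Let f : ℂ → ℂ be continuous and complex differentiable at every point of ℂ \ S, and assume the function z ↦ f′(z) (defined a.e., extended by 0 on S) is locally integrable on ℂ. Then f is a weak solution of the Cauchy–Riemann equation on all of ℂ: for every smooth compactly supported φ : ℂ → ℂ (smooth as a map ℝ² → ℝ²), ∫_ℂ f(z) · (∂φ/∂x (z) + i · ∂φ/∂y (z)) dA(z) = 0. -/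
open MeasureTheory Classical

open Set Function in
/-- A locally integrable function times a continuous compactly supported
function is integrable. -/
lemma aux_integrable_mul {G : ℂ → ℂ} (hG : LocallyIntegrable G volume)
    {φ : ℂ → ℂ} (hφ : Continuous φ) (hφc : HasCompactSupport φ) :
    Integrable (fun z => G z * φ z) volume := by
  have h : (fun z => G z * φ z) = fun z => φ z • G z := by
    ext z; simp [smul_eq_mul, mul_comm]
  rw [h]
  have hK : IsCompact (tsupport φ) := hφc
  have heq : (tsupport φ).indicator (fun z => φ z • G z) = fun z => φ z • G z := by
    apply Set.indicator_eq_self.2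
    apply Function.support_subset_iff'.2
    intro x hx
    simp [image_eq_zero_of_notMem_tsupport hx]
  rw [← heq, Set.indicator_smul]
  exact Integrable.smul_of_top_right
    ((integrable_indicator_iff hK.measurableSet).2 (hG.integrableOn_isCompact hK))
    (hφ.memLp_top_of_hasCompactSupport hφc _)

open Set Function in
/-- 1D integration by parts: the integral of a compactly supported a.e.-derivative
vanishes, allowing a countable exceptional set. -/
lemma aux_line (g W : ℝ → ℂ) {s : Set ℝ} (hs : s.Countable)
    (hgc : Continuous g) (hW : Integrable W volume)
    (hd : ∀ t ∉ s, HasDerivAt g (W t) t)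
    (R : ℝ) (hgR : ∀ t : ℝ, R ≤ |t| → g t = 0) (hWR : ∀ t : ℝ, R ≤ |t| → W t = 0) :
    ∫ t : ℝ, W t = 0 := by
  set b : ℝ := |R| + 1 with hb
  have hb0 : 0 < b := by positivity
  have hRb : R ≤ b := le_trans (le_abs_self R) (by linarith)
  have habs : ∀ t : ℝ, t ∉ Set.Ioc (-b) b → R ≤ |t| := by
    intro t ht
    rw [Set.mem_Ioc, not_and_or, not_lt, not_le] at ht
    rcases ht with ht | ht
    · have : b ≤ |t| := by rw [abs_of_nonpos (by linarith)]; linarith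
      linarith
    · have : b ≤ |t| := le_trans ht.le (le_abs_self t)
      linarith
  have hsupp : Function.support W ⊆ Set.Ioc (-b) b := by
    intro t ht
    by_contra hmem
    exact ht (hWR t (habs t hmem))
  rw [← intervalIntegral.integral_eq_integral_of_support_subset hsupp]
  have h2 := integral_eq_of_hasDerivAt_off_countable_of_le g W
    (by linarith : (-b) ≤ b) hs hgc.continuousOn
    (fun x hx => hd x hx.2) (hW.intervalIntegrable)
  rw [h2, hgR b (by rw [abs_of_pos hb0]; exact hRb),
    hgR (-b) (by rw [abs_neg, abs_of_pos hb0]; exact hRb), sub_zero]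

open Set Function in
/-- Integration by parts along a family of parallel lines in direction `c`. -/
lemma aux_dir (S : Set ℂ) (f G : ℂ → ℂ) (hf : Continuous f)
    (hdiff : ∀ z ∉ S, DifferentiableAt ℂ f z)
    (hGS : ∀ z ∉ S, G z = deriv f z)
    (φ : ℂ → ℂ) (hφ : ContDiff ℝ (⊤ : ℕ∞) φ) (hφc : HasCompactSupport φ)
    (c : ℂ) (hc : ‖c‖ = 1)
    (e : ℝ × ℝ ≃ᵐ ℂ) (he : MeasurePreserving e (volume.prod volume) volume)
    (hce : ∀ t v : ℝ, e (t, v) = e (0, v) + t * c)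
    (hlines : ∀ᵐ v : ℝ, {t : ℝ | e (t, v) ∈ S}.Countable)
    (hW : Integrable (fun z => G z * c * φ z + f z * fderiv ℝ φ z c) volume) :
    ∫ z : ℂ, (G z * c * φ z + f z * fderiv ℝ φ z c) = 0 := by
  set W : ℂ → ℂ := fun z => G z * c * φ z + f z * fderiv ℝ φ z c with hWdef
  obtain ⟨r, hr⟩ : ∃ r : ℝ, tsupport φ ⊆ Metric.closedBall 0 r :=
    hφc.isBounded.subset_closedBall 0
  have hint : Integrable (fun p : ℝ × ℝ => W (e p)) (volume.prod volume) :=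
    (he.integrable_comp_emb e.measurableEmbedding).2 hW
  have h1 : ∫ z, W z = ∫ p : ℝ × ℝ, W (e p) ∂(volume.prod volume) :=
    (he.integral_comp e.measurableEmbedding W).symm
  have hswap : Integrable (fun p : ℝ × ℝ => W (e (p.2, p.1))) (volume.prod volume) :=
    hint.swap
  have h2 : ∫ p : ℝ × ℝ, W (e (p.2, p.1)) ∂(volume.prod volume)
      = ∫ p : ℝ × ℝ, W (e p) ∂(volume.prod volume) :=
    (Measure.measurePreserving_swap (μ := volume) (ν := volume)).integral_comp
      MeasurableEquiv.prodComm.measurableEmbedding (fun p => W (e p))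
  have h3 : ∫ p : ℝ × ℝ, W (e (p.2, p.1)) ∂(volume.prod volume)
      = ∫ v : ℝ, ∫ t : ℝ, W (e (t, v)) := integral_prod _ hswap
  rw [h1, ← h2, h3]
  have hae : ∀ᵐ v : ℝ, (∫ t : ℝ, W (e (t, v))) = 0 := by
    filter_upwards [hlines, hswap.prod_right_ae] with v hv hiv
    set z₀ : ℂ := e (0, v) with hz₀
    set γ : ℝ → ℂ := fun t => z₀ + t * c with hγdef
    have hγe : ∀ t : ℝ, e (t, v) = γ t := fun t => hce t v
    have hγ' : ∀ t : ℝ, HasDerivAt γ c t := by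
      intro t
      have h1 : HasDerivAt (fun t : ℝ => (t : ℂ)) 1 t := by
        exact (hasDerivAt_id t).ofReal_comp
      exact ((h1.mul_const c).const_add z₀).congr_deriv (one_mul c)
    have hγc : Continuous γ :=
      continuous_const.add (Complex.continuous_ofReal.mul continuous_const)
    have hnorm : ∀ t : ℝ, r + ‖z₀‖ + 1 ≤ |t| → γ t ∉ tsupport φ := by
      intro t ht hmem
      have h4 : ‖γ t‖ ≤ r := by simpa [Complex.dist_eq] using hr hmem
      have h5 : |t| = ‖(t : ℂ) * c‖ := by
        rw [norm_mul, hc, mul_one, Complex.norm_real, Real.norm_eq_abs]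
      have h6 : ‖(t : ℂ) * c‖ ≤ ‖γ t‖ + ‖z₀‖ := by
        calc ‖(t : ℂ) * c‖ = ‖γ t - z₀‖ := by rw [hγdef]; ring_nf
        _ ≤ ‖γ t‖ + ‖z₀‖ := norm_sub_le _ _
      rw [h5] at ht
      linarith
    apply aux_line (fun t => f (γ t) * φ (γ t)) (fun t => W (e (t, v))) hv
      ((hf.comp hγc).mul (hφ.continuous.comp hγc)) hiv ?_ (r + ‖z₀‖ + 1) ?_ ?_
    · intro t ht
      have hz : γ t ∉ S := by rw [← hγe t]; exact ht
      have hf1 : HasDerivAt (fun t : ℝ => f (γ t)) (c • deriv f (γ t)) t :=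
        ((hdiff _ hz).hasDerivAt).scomp t (hγ' t)
      have hf2 : HasDerivAt (fun t : ℝ => φ (γ t)) (fderiv ℝ φ (γ t) c) t :=
        ((hφ.differentiable (by simp) (γ t)).hasFDerivAt).comp_hasDerivAt t (hγ' t)
      have := hf1.mul hf2
      refine this.congr_deriv (Eq.symm ?_)
      show W (e (t, v)) = c • deriv f (γ t) * φ (γ t) + f (γ t) * fderiv ℝ φ (γ t) c
      rw [hγe t]
      simp only [hWdef, hGS _ hz, smul_eq_mul]
      ring
    · intro t ht
      show f (γ t) * φ (γ t) = 0
      rw [image_eq_zero_of_notMem_tsupport (hnorm t ht), mul_zero]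
    · intro t ht
      have h7 := hnorm t ht
      have h8 : fderiv ℝ φ (γ t) = 0 := by
        by_contra h9
        exact h7 (support_fderiv_subset ℝ (by simpa using h9))
      show W (e (t, v)) = 0
      rw [hγe t]
      simp [hWdef, image_eq_zero_of_notMem_tsupport h7, h8]
  rw [integral_congr_ae hae, integral_zero]

noncomputable def e1 : ℝ × ℝ ≃ᵐ ℂ := Complex.measurableEquivRealProd.symm
noncomputable def e2 : ℝ × ℝ ≃ᵐ ℂ := MeasurableEquiv.prodComm.trans e1

lemma he1 : MeasurePreserving e1 (volume.prod volume) volume :=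
  MeasurePreserving.symm _ Complex.volume_preserving_equiv_real_prod

lemma he2 : MeasurePreserving e2 (volume.prod volume) volume :=
  he1.comp (Measure.measurePreserving_swap (μ := volume) (ν := volume))

lemma e1_apply (t b : ℝ) : e1 (t, b) = (t + b * Complex.I : ℂ) := by
  simp [e1, Complex.measurableEquivRealProd, Complex.equivRealProdCLM_symm_apply]

lemma e2_apply (t a : ℝ) : e2 (t, a) = (a + t * Complex.I : ℂ) := by
  simp [e2, MeasurableEquiv.prodComm, e1_apply]

/-- Holomorphic removability across a closed null set meeting almost every
horizontal and vertical line at most countably: such a continuous function,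
holomorphic off `S` with locally integrable derivative, is a weak solution
of the Cauchy–Riemann equation on all of `ℂ`. -/
theorem weakly_holomorphic_of_countable_line_intersections
    (S : Set ℂ) (hS : IsClosed S) (hS0 : volume S = 0)
    (hHor : ∀ᵐ b : ℝ, {t : ℝ | (t + b * Complex.I : ℂ) ∈ S}.Countable)
    (hVer : ∀ᵐ a : ℝ, {t : ℝ | (a + t * Complex.I : ℂ) ∈ S}.Countable)
    (f : ℂ → ℂ) (hf : Continuous f)
    (hdiff : ∀ z : ℂ, z ∉ S → DifferentiableAt ℂ f z)
    (hf' : LocallyIntegrable (fun z : ℂ => if z ∈ S then 0 else deriv f z) volume) :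
    ∀ φ : ℂ → ℂ, ContDiff ℝ (⊤ : ℕ∞) φ → HasCompactSupport φ →
      ∫ z : ℂ, f z * (fderiv ℝ φ z 1 + Complex.I * fderiv ℝ φ z Complex.I) = 0 := by
  intro φ hφ hφc
  set G : ℂ → ℂ := fun z => if z ∈ S then 0 else deriv f z with hGdef
  have hGS : ∀ z ∉ S, G z = deriv f z := fun z hz => if_neg hz
  -- integrability of the various pieces
  have hmul : ∀ c : ℂ, Integrable (fun z => G z * c * φ z) volume := by
    intro c
    have h : (fun z => G z * c * φ z) = fun z => G z * (c * φ z) := by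
      ext z; ring
    rw [h]
    exact aux_integrable_mul hf' (continuous_const.mul hφ.continuous) hφc.mul_left
  have hcont2 : ∀ c : ℂ, Continuous fun z => f z * fderiv ℝ φ z c := by
    intro c
    exact hf.mul ((hφ.continuous_fderiv_apply (by simp)).comp
      (continuous_id.prodMk continuous_const))
  have hsupp2 : ∀ c : ℂ, HasCompactSupport fun z => f z * fderiv ℝ φ z c := by
    intro c
    exact (hφc.fderiv_apply ℝ c).mul_left
  have hint2 : ∀ c : ℂ, Integrable (fun z => f z * fderiv ℝ φ z c) volume :=
    fun c => (hcont2 c).integrable_of_hasCompactSupport (hsupp2 c)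
  have hW : ∀ c : ℂ, Integrable (fun z => G z * c * φ z + f z * fderiv ℝ φ z c) volume :=
    fun c => (hmul c).add (hint2 c)
  -- horizontal lines, direction 1
  have key1 : ∫ z : ℂ, (G z * 1 * φ z + f z * fderiv ℝ φ z 1) = 0 := by
    apply aux_dir S f G hf hdiff hGS φ hφ hφc 1 (by simp) e1 he1 ?_ ?_ (hW 1)
    · intro t v
      rw [e1_apply, e1_apply]
      push_cast
      ring
    · filter_upwards [hHor] with b hb
      have : {t : ℝ | e1 (t, b) ∈ S} = {t : ℝ | (t + b * Complex.I : ℂ) ∈ S} := by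
        ext t; rw [Set.mem_setOf_eq, Set.mem_setOf_eq, e1_apply]
      rw [this]; exact hb
  -- vertical lines, direction I
  have key2 : ∫ z : ℂ, (G z * Complex.I * φ z + f z * fderiv ℝ φ z Complex.I) = 0 := by
    apply aux_dir S f G hf hdiff hGS φ hφ hφc Complex.I (by simp) e2 he2 ?_ ?_ (hW Complex.I)
    · intro t v
      rw [e2_apply, e2_apply]
      push_cast
      ring
    · filter_upwards [hVer] with a ha
      have : {t : ℝ | e2 (t, a) ∈ S} = {t : ℝ | (a + t * Complex.I : ℂ) ∈ S} := by
        ext t; rw [Set.mem_setOf_eq, Set.mem_setOf_eq, e2_apply]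
      rw [this]; exact ha
  -- combine
  have hpt : (fun z => f z * (fderiv ℝ φ z 1 + Complex.I * fderiv ℝ φ z Complex.I))
      = fun z => (G z * 1 * φ z + f z * fderiv ℝ φ z 1)
        + Complex.I • (G z * Complex.I * φ z + f z * fderiv ℝ φ z Complex.I) := by
    ext z
    simp only [smul_eq_mul]
    linear_combination (-(G z * φ z)) * Complex.I_sq
  have hsm : Integrable
      (fun z => Complex.I • (G z * Complex.I * φ z + f z * fderiv ℝ φ z Complex.I)) volume :=
    (hW Complex.I).smul Complex.I
  rw [hpt, integral_add (hW 1) hsm, integral_smul, key1, key2, smul_zero, add_zero]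
end

section
/- Let 1 < p < ∞ and N ≥ 1; identify ℝ^N with ℝ × ℝ^{N−1}. For an open set ω ⊆ ℝ^N define C_{1,p}(ω) = inf { ‖φ‖_{L^p(ℝ^N)} + ‖ |∇φ| ‖_{L^p(ℝ^N)} : φ : ℝ^N → ℝ smooth with compact support and φ ≥ 1 on ω }. Let u : ℝ^N → ℝ be C_{1,p}-quasicontinuous, i.e., for every ε > 0 there is an open set ω ⊆ ℝ^N with C_{1,p}(ω) < ε such that the restriction of u to ℝ^N \ ω is continuous. Then for (N−1)-dimensional-Lebesgue almost every y ∈ ℝ^{N−1}, the function t ↦ u(t,y) is continuous on ℝ. -/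
open MeasureTheory Set Filter
open scoped ENNReal NNReal

/-- The `(1,p)`-capacity of an open set `ω ⊆ ℝ × ℝ^{N-1}`:
`inf { ‖φ‖_{L^p} + ‖ |∇φ| ‖_{L^p} : φ smooth, compactly supported, φ ≥ 1 on ω }`. -/
noncomputable def capacityOnePProd (n : ℕ) (p : ℝ)
    (ω : Set (ℝ × (Fin n → ℝ))) : ENNReal :=
  ⨅ (φ : ℝ × (Fin n → ℝ) → ℝ) (_ : ContDiff ℝ (⊤ : ℕ∞) φ) (_ : HasCompactSupport φ)
    (_ : ∀ x ∈ ω, 1 ≤ φ x),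
    eLpNorm φ (ENNReal.ofReal p) volume +
      eLpNorm (fun x => ‖fderiv ℝ φ x‖) (ENNReal.ofReal p) volume

lemma st_deriv_zero_of_neg {s : ℝ} (h : s < 0) : deriv Real.smoothTransition s = 0 := by
  have he : Real.smoothTransition =ᶠ[nhds s] (fun _ => (0:ℝ)) := by
    filter_upwards [Iio_mem_nhds h] with x hx
    exact Real.smoothTransition.zero_of_nonpos hx.le
  rw [he.deriv_eq]; exact deriv_const s 0

lemma bad_set_bound (n : ℕ) {p : ℝ} (hp : 1 < p) {C : ℝ} (hC : 1 ≤ C)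
    (hCb : ∀ s, |deriv Real.smoothTransition s| ≤ C)
    {ω : Set (ℝ × (Fin n → ℝ))} (hω : IsOpen ω) {δ : ℝ≥0∞}
    (hδ : capacityOnePProd n p ω < δ) :
    volume {y : Fin n → ℝ | ∃ t, (t, y) ∈ ω}
      ≤ (ENNReal.ofReal ((2*C) ^ (p/(p-1))) * ENNReal.ofReal ((2:ℝ) ^ p) + 1) * δ ^ p := by
  have hp0 : (0:ℝ) < p := lt_trans one_pos hp
  set q : ℝ := p / (p - 1) with hqdef
  have hpq : Real.HolderConjugate p q := Real.HolderConjugate.conjExponent hp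
  -- extract a test function from the capacity bound
  simp only [capacityOnePProd, iInf_lt_iff] at hδ
  obtain ⟨φ, hφ, hsupp, hge, hlt⟩ := hδ
  have hφc : Continuous φ := hφ.continuous
  have hfd : Continuous (fun z => fderiv ℝ φ z) :=
    hφ.continuous_fderiv (by simp)
  set A : Set (ℝ × (Fin n → ℝ)) := {z | (1:ℝ)/2 ≤ φ z} with hAdef
  have hAmeas : MeasurableSet A := (isClosed_le continuous_const hφc).measurableSet
  set D : (ℝ × (Fin n → ℝ)) → ℝ≥0∞ := fun z =>
    A.indicator (fun _ => ENNReal.ofReal ((2*C) ^ q)) z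
      + ENNReal.ofReal (‖fderiv ℝ φ z‖ ^ p) with hDdef
  have hmeas2 : Measurable fun z : ℝ × (Fin n → ℝ) => ENNReal.ofReal (‖fderiv ℝ φ z‖ ^ p) :=
    (ENNReal.continuous_ofReal.comp
      ((hfd.norm).rpow_const (fun x => Or.inr hp0.le))).measurable
  have hDmeas : Measurable D :=
    (measurable_const.indicator hAmeas).add hmeas2
  -- the key pointwise-in-`y` estimate
  have key : ∀ y : Fin n → ℝ, (∃ t, (t, y) ∈ ω) → (1 : ℝ≥0∞) ≤ ∫⁻ t, D (t, y) := by
    rintro y ⟨t₀, ht₀⟩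
    have hφ1 : 1 ≤ φ (t₀, y) := hge _ ht₀
    set ψ : ℝ → ℝ := fun t => φ (t, y) with hψdef
    set g : ℝ → ℝ := fun t => Real.smoothTransition (2 * ψ t - 1) with hgdef
    set g' : ℝ → ℝ := fun t =>
      deriv Real.smoothTransition (2 * ψ t - 1)
        * (2 * (fderiv ℝ φ (t, y)) (1, 0)) with hg'def
    have hψd : ∀ t, HasDerivAt ψ ((fderiv ℝ φ (t, y)) (1, 0)) t := by
      intro t
      have h1 : HasDerivAt (fun t : ℝ => ((t : ℝ), y)) (1, (0 : Fin n → ℝ)) t :=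
        (hasDerivAt_id t).prodMk (hasDerivAt_const t y)
      exact (hφ.differentiable (by simp) (t, y)).hasFDerivAt.comp_hasDerivAt t h1
    have hgd : ∀ t, HasDerivAt g (g' t) t := by
      intro t
      have h2 : HasDerivAt (fun t => 2 * ψ t - 1) (2 * (fderiv ℝ φ (t, y)) (1, 0)) t :=
        ((hψd t).const_mul 2).sub_const 1
      have h3 : HasDerivAt Real.smoothTransition
          (deriv Real.smoothTransition (2 * ψ t - 1)) (2 * ψ t - 1) :=
        ((Real.smoothTransition.contDiff (n := (⊤ : ℕ∞))).differentiable (by simp) _).hasDerivAt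
      exact h3.comp t h2
    obtain ⟨R, hR⟩ := hsupp.isBounded.subset_closedBall (0 : ℝ × (Fin n → ℝ))
    set a : ℝ := -(|R| + |t₀| + 1) with hadef
    have hat : a ≤ t₀ := by
      have h1 : 0 ≤ |R| := abs_nonneg R
      have h2 : -|t₀| ≤ t₀ := neg_abs_le t₀
      simp only [hadef]; linarith
    have hga : g a = 0 := by
      have hout : (a, y) ∉ tsupport φ := by
        intro hmem
        have hball := hR hmem
        rw [Metric.mem_closedBall, dist_zero_right] at hball
        have h1 : |a| ≤ ‖((a:ℝ), y)‖ := by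
          rw [Prod.norm_def]
          exact le_trans (le_of_eq (Real.norm_eq_abs a).symm) (le_max_left _ _)
        have h2 : |a| = |R| + |t₀| + 1 := by
          rw [hadef, abs_neg, abs_of_nonneg (by positivity)]
        have h3 : R ≤ |R| := le_abs_self R
        have h4 : (0:ℝ) ≤ |t₀| := abs_nonneg t₀
        linarith
      have hz : φ (a, y) = 0 := image_eq_zero_of_notMem_tsupport hout
      have : (2 : ℝ) * ψ a - 1 = -1 := by simp [hψdef, hz]
      simp only [hgdef]
      rw [this]
      exact Real.smoothTransition.zero_of_nonpos (by norm_num)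
    have hgt₀ : g t₀ = 1 := by
      simp only [hgdef]
      exact Real.smoothTransition.one_of_one_le (by simp only [hψdef]; linarith)
    have hg'cont : Continuous g' := by
      have c1 : Continuous ψ := hφc.comp (continuous_id.prodMk continuous_const)
      have c2 : Continuous (deriv Real.smoothTransition) :=
        (Real.smoothTransition.contDiff (n := (⊤ : ℕ∞))).continuous_deriv (by exact_mod_cast le_top)
      have c3 : Continuous fun t : ℝ => (fderiv ℝ φ (t, y)) (1, (0 : Fin n → ℝ)) :=
        (hfd.comp (continuous_id.prodMk continuous_const)).clm_apply continuous_const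
      exact (c2.comp (((continuous_const.mul c1)).sub continuous_const)).mul (continuous_const.mul c3)
    have hint : IntervalIntegrable g' volume a t₀ := hg'cont.intervalIntegrable a t₀
    have hftc : ∫ t in a..t₀, g' t = g t₀ - g a :=
      intervalIntegral.integral_eq_sub_of_hasDerivAt (fun t _ => hgd t) hint
    have h1 : (1:ℝ) ≤ ∫ t in Set.Ioc a t₀, |g' t| := by
      have habs : |∫ t in a..t₀, g' t| ≤ ∫ t in a..t₀, |g' t| :=
        intervalIntegral.abs_integral_le_integral_abs hat
      have hone : (1:ℝ) = ∫ t in a..t₀, g' t := by rw [hftc, hga, hgt₀]; ring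
      calc (1:ℝ) = ∫ t in a..t₀, g' t := hone
        _ ≤ |∫ t in a..t₀, g' t| := le_abs_self _
        _ ≤ ∫ t in a..t₀, |g' t| := habs
        _ = ∫ t in Set.Ioc a t₀, |g' t| := intervalIntegral.integral_of_le hat
    have heq : ∫ t in Set.Ioc a t₀, |g' t|
        = (∫⁻ t in Set.Ioc a t₀, ENNReal.ofReal |g' t|).toReal :=
      integral_eq_lintegral_of_nonneg_ae (ae_of_all _ fun t => abs_nonneg _)
        hg'cont.abs.aestronglyMeasurable
    have h2 : (1:ℝ≥0∞) ≤ ∫⁻ t in Set.Ioc a t₀, ENNReal.ofReal |g' t| := by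
      rw [heq] at h1
      calc (1:ℝ≥0∞) = ENNReal.ofReal 1 := by simp
        _ ≤ ENNReal.ofReal ((∫⁻ t in Set.Ioc a t₀, ENNReal.ofReal |g' t|).toReal) :=
            ENNReal.ofReal_le_ofReal h1
        _ ≤ _ := ENNReal.ofReal_toReal_le
    refine le_trans h2 (le_trans (setLIntegral_le_lintegral _ _)
      (lintegral_mono fun t => ?_))
    rcases lt_or_ge (ψ t) (1/2 : ℝ) with hlt2 | hge2
    · have hzero : deriv Real.smoothTransition (2 * ψ t - 1) = 0 :=
        st_deriv_zero_of_neg (by linarith)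
      have : g' t = 0 := by simp only [hg'def]; rw [hzero]; ring
      simp [this]
    · have hmem : (t, y) ∈ A := hge2
      have hb1 : |g' t| ≤ (2*C) * ‖fderiv ℝ φ (t, y)‖ := by
        have e1 : |(fderiv ℝ φ (t, y)) (1, (0 : Fin n → ℝ))| ≤ ‖fderiv ℝ φ (t, y)‖ := by
          have hle := (fderiv ℝ φ (t, y)).le_opNorm ((1:ℝ), (0 : Fin n → ℝ))
          have hn : ‖((1:ℝ), (0 : Fin n → ℝ))‖ = 1 := by
            simp [Prod.norm_def]
          rw [hn, mul_one] at hle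
          exact le_trans (le_of_eq (Real.norm_eq_abs _).symm) hle
        have e0 : (0:ℝ) ≤ C := le_trans zero_le_one hC
        calc |g' t|
            = |deriv Real.smoothTransition (2 * ψ t - 1)|
              * (2 * |(fderiv ℝ φ (t, y)) (1, (0 : Fin n → ℝ))|) := by
              simp only [hg'def]; rw [abs_mul, abs_mul]; norm_num
          _ ≤ C * (2 * ‖fderiv ℝ φ (t, y)‖) := by
              apply mul_le_mul (hCb _) (by linarith [e1]) (by positivity) e0
          _ = (2*C) * ‖fderiv ℝ φ (t, y)‖ := by ring
      have hyoung : (2*C) * ‖fderiv ℝ φ (t, y)‖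
          ≤ (2*C) ^ q + ‖fderiv ℝ φ (t, y)‖ ^ p := by
        have hy := Real.young_inequality_of_nonneg
          (a := 2*C) (b := ‖fderiv ℝ φ (t, y)‖) (by positivity) (norm_nonneg _) hpq.symm
        have d1 : (2*C) ^ q / q ≤ (2*C) ^ q :=
          div_le_self (by positivity) hpq.symm.lt.le
        have d2 : ‖fderiv ℝ φ (t, y)‖ ^ p / p ≤ ‖fderiv ℝ φ (t, y)‖ ^ p :=
          div_le_self (by positivity) hp.le
        linarith
      calc ENNReal.ofReal |g' t|
          ≤ ENNReal.ofReal ((2*C) ^ q + ‖fderiv ℝ φ (t, y)‖ ^ p) :=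
            ENNReal.ofReal_le_ofReal (hb1.trans hyoung)
        _ = ENNReal.ofReal ((2*C) ^ q) + ENNReal.ofReal (‖fderiv ℝ φ (t, y)‖ ^ p) :=
            ENNReal.ofReal_add (by positivity) (by positivity)
        _ ≤ D (t, y) := by
            simp only [hDdef]
            rw [Set.indicator_of_mem hmem]
  -- global estimate via Fubini and Markov
  set B : Set (Fin n → ℝ) := {y | ∃ t, (t, y) ∈ ω} with hBdef
  have hBopen : IsOpen B := by
    have hBeq : B = ⋃ t : ℝ, (fun y : Fin n → ℝ => ((t : ℝ), y)) ⁻¹' ω := by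
      ext y; simp [hBdef, Set.mem_iUnion]
    rw [hBeq]
    exact isOpen_iUnion fun t => hω.preimage (continuous_const.prodMk continuous_id)
  have hinner : Measurable fun y : Fin n → ℝ => ∫⁻ t, D (t, y) :=
    hDmeas.lintegral_prod_left'
  have step1 : volume B ≤ ∫⁻ y, ∫⁻ t, D (t, y) := by
    calc volume B = ∫⁻ _ in B, 1 := (setLIntegral_one B).symm
      _ ≤ ∫⁻ y in B, ∫⁻ t, D (t, y) := setLIntegral_mono hinner (fun y hy => key y hy)
      _ ≤ ∫⁻ y, ∫⁻ t, D (t, y) := setLIntegral_le_lintegral _ _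
  have step2 : ∫⁻ z, D z = ∫⁻ y, ∫⁻ t, D (t, y) := by
    rw [MeasureTheory.Measure.volume_eq_prod]
    exact MeasureTheory.lintegral_prod_symm' D hDmeas
  set E1 : ℝ≥0∞ := ∫⁻ z, ENNReal.ofReal (|φ z| ^ p) with hE1def
  set E2 : ℝ≥0∞ := ∫⁻ z, ENNReal.ofReal (‖fderiv ℝ φ z‖ ^ p) with hE2def
  have hsplit : ∫⁻ z, D z = ENNReal.ofReal ((2*C) ^ q) * volume A + E2 := by
    simp only [hDdef]
    rw [lintegral_add_left (measurable_const.indicator hAmeas),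
      lintegral_indicator_const hAmeas]
  have hone : ∀ z ∈ A, (1:ℝ≥0∞) ≤ ENNReal.ofReal ((2:ℝ)^p) * ENNReal.ofReal (|φ z| ^ p) := by
    intro z hz
    have h1 : (1:ℝ)/2 ≤ φ z := hz
    have h2 : (1:ℝ) ≤ 2 * |φ z| := by
      have := le_abs_self (φ z); linarith
    have h3 : (1:ℝ) ≤ (2 * |φ z|) ^ p := by
      have := Real.rpow_le_rpow (by norm_num) h2 hp0.le
      rwa [Real.one_rpow] at this
    have h4 : (2 * |φ z|) ^ p = 2^p * |φ z|^p := Real.mul_rpow (by norm_num) (abs_nonneg _)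
    rw [← ENNReal.ofReal_mul (by positivity), ← h4]
    calc (1:ℝ≥0∞) = ENNReal.ofReal 1 := by simp
      _ ≤ ENNReal.ofReal ((2*|φ z|)^p) := ENNReal.ofReal_le_ofReal h3
  have hmeasφ : Measurable fun z : ℝ × (Fin n → ℝ) => ENNReal.ofReal (|φ z| ^ p) :=
    (ENNReal.continuous_ofReal.comp
      ((hφc.abs).rpow_const (fun x => Or.inr hp0.le))).measurable
  have hvolA : volume A ≤ ENNReal.ofReal ((2:ℝ)^p) * E1 := by
    calc volume A = ∫⁻ _ in A, 1 := (setLIntegral_one A).symm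
      _ ≤ ∫⁻ z in A, ENNReal.ofReal ((2:ℝ)^p) * ENNReal.ofReal (|φ z| ^ p) :=
          setLIntegral_mono (measurable_const.mul hmeasφ) hone
      _ ≤ ∫⁻ z, ENNReal.ofReal ((2:ℝ)^p) * ENNReal.ofReal (|φ z| ^ p) :=
          setLIntegral_le_lintegral _ _
      _ = ENNReal.ofReal ((2:ℝ)^p) * E1 := lintegral_const_mul _ hmeasφ
  have hofp : (ENNReal.ofReal p) ≠ 0 := by
    simp only [ne_eq, ENNReal.ofReal_eq_zero, not_le]; exact hp0
  have htop : (ENNReal.ofReal p) ≠ ⊤ := ENNReal.ofReal_ne_top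
  have htoReal : (ENNReal.ofReal p).toReal = p := ENNReal.toReal_ofReal hp0.le
  have hE1' : E1 = (eLpNorm φ (ENNReal.ofReal p) volume) ^ p := by
    rw [eLpNorm_eq_lintegral_rpow_enorm_toReal hofp htop, htoReal, ← ENNReal.rpow_mul,
      one_div_mul_cancel (ne_of_gt hp0), ENNReal.rpow_one, hE1def]
    congr 1
    funext z
    rw [Real.enorm_eq_ofReal_abs, ENNReal.ofReal_rpow_of_nonneg (abs_nonneg _) hp0.le]
  have hE2' : E2 = (eLpNorm (fun x => ‖fderiv ℝ φ x‖) (ENNReal.ofReal p) volume) ^ p := by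
    rw [eLpNorm_eq_lintegral_rpow_enorm_toReal hofp htop, htoReal, ← ENNReal.rpow_mul,
      one_div_mul_cancel (ne_of_gt hp0), ENNReal.rpow_one, hE2def]
    congr 1
    funext z
    rw [enorm_norm, ← ofReal_norm_eq_enorm,
      ENNReal.ofReal_rpow_of_nonneg (norm_nonneg _) hp0.le]
  have hn1 : eLpNorm φ (ENNReal.ofReal p) volume ≤ δ :=
    le_of_lt (lt_of_le_of_lt (self_le_add_right _ _) hlt)
  have hn2 : eLpNorm (fun x => ‖fderiv ℝ φ x‖) (ENNReal.ofReal p) volume ≤ δ :=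
    le_of_lt (lt_of_le_of_lt (le_add_self) hlt)
  have hE1le : E1 ≤ δ ^ p := hE1' ▸ ENNReal.rpow_le_rpow hn1 hp0.le
  have hE2le : E2 ≤ δ ^ p := hE2' ▸ ENNReal.rpow_le_rpow hn2 hp0.le
  calc volume B ≤ ∫⁻ y, ∫⁻ t, D (t, y) := step1
    _ = ∫⁻ z, D z := step2.symm
    _ = ENNReal.ofReal ((2*C) ^ q) * volume A + E2 := hsplit
    _ ≤ ENNReal.ofReal ((2*C) ^ q) * (ENNReal.ofReal ((2:ℝ)^p) * (δ ^ p)) + δ ^ p := by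
        gcongr
        exact hvolA.trans (by gcongr)
    _ = (ENNReal.ofReal ((2*C) ^ q) * ENNReal.ofReal ((2:ℝ) ^ p) + 1) * δ ^ p := by ring

lemma st_deriv_bound : ∃ C : ℝ, 1 ≤ C ∧ ∀ s : ℝ, |deriv Real.smoothTransition s| ≤ C := by
  have hcont : Continuous (deriv Real.smoothTransition) :=
    (Real.smoothTransition.contDiff (n := (⊤ : ℕ∞))).continuous_deriv (by exact_mod_cast le_top)
  obtain ⟨x₀, -, hx₀⟩ := isCompact_Icc.exists_isMaxOn (Set.nonempty_Icc.2 zero_le_one)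
    (hcont.abs.continuousOn (s := Icc (0:ℝ) 1))
  have hst1 : ∀ s : ℝ, 1 < s → deriv Real.smoothTransition s = 0 := by
    intro s h
    have he : Real.smoothTransition =ᶠ[nhds s] (fun _ => (1:ℝ)) := by
      filter_upwards [Ioi_mem_nhds h] with x hx
      exact Real.smoothTransition.one_of_one_le hx.le
    rw [he.deriv_eq]; exact deriv_const s 1
  refine ⟨max (|deriv Real.smoothTransition x₀|) 1, le_max_right _ _, fun s => ?_⟩
  rcases lt_or_ge s 0 with h | h
  · rw [st_deriv_zero_of_neg h]; simp
  rcases le_or_gt s 1 with h1 | h1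
  · exact le_trans (hx₀ ⟨h, h1⟩) (le_max_left _ _)
  · rw [hst1 s h1]; simp

/-- Claim (2.17)/(2.19) in the proof of Theorem 2.16: a `C_{1,p}`-quasicontinuous
function is continuous on almost every line parallel to the first coordinate axis. -/
theorem quasicontinuous_continuous_on_ae_lines
    (N : ℕ) (hN : 1 ≤ N) (p : ℝ) (hp : 1 < p)
    (u : ℝ × (Fin (N - 1) → ℝ) → ℝ)
    (hqc : ∀ ε : ENNReal, 0 < ε → ∃ ω : Set (ℝ × (Fin (N - 1) → ℝ)),
      IsOpen ω ∧ capacityOnePProd (N - 1) p ω < ε ∧ ContinuousOn u ωᶜ) :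
    ∀ᵐ y : Fin (N - 1) → ℝ, Continuous (fun t : ℝ => u (t, y)) := by
  obtain ⟨C, hC, hCb⟩ := st_deriv_bound
  have hp0 : (0:ℝ) < p := lt_trans one_pos hp
  set K : ℝ≥0∞ := ENNReal.ofReal ((2*C) ^ (p/(p-1))) * ENNReal.ofReal ((2:ℝ) ^ p) + 1
    with hKdef
  have hK1 : (1:ℝ≥0∞) ≤ K := le_add_self
  have hK0 : K ≠ 0 := (lt_of_lt_of_le one_pos hK1).ne'
  have hKtop : K ≠ ⊤ := by
    rw [hKdef]
    exact ENNReal.add_ne_top.mpr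
      ⟨ENNReal.mul_ne_top ENNReal.ofReal_ne_top ENNReal.ofReal_ne_top, ENNReal.one_ne_top⟩
  rw [ae_iff]
  have main : ∀ ε : ℝ≥0, 0 < ε →
      volume {y : Fin (N-1) → ℝ | ¬ Continuous (fun t : ℝ => u (t, y))} ≤ (ε : ℝ≥0∞) := by
    intro ε hε
    have hdiv : 0 < (ε : ℝ≥0∞) / K := ENNReal.div_pos (by exact_mod_cast hε.ne') hKtop
    set δ : ℝ≥0∞ := min (((ε : ℝ≥0∞) / K) ^ (1/p)) 1 with hδdef
    have hdt : (ε : ℝ≥0∞) / K ≠ ⊤ := by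
      simp [ENNReal.div_eq_top, hK0]
    have hδpos : 0 < δ := lt_min (ENNReal.rpow_pos hdiv hdt) one_pos
    have hδp : δ ^ p ≤ (ε : ℝ≥0∞) / K := by
      have h1 : δ ^ p ≤ ((((ε : ℝ≥0∞) / K) ^ (1/p))) ^ p :=
        ENNReal.rpow_le_rpow (min_le_left _ _) hp0.le
      rwa [← ENNReal.rpow_mul, one_div_mul_cancel (ne_of_gt hp0), ENNReal.rpow_one] at h1
    obtain ⟨ω, hω, hcap, hcont⟩ := hqc δ hδpos
    have hsub : {y : Fin (N-1) → ℝ | ¬ Continuous (fun t : ℝ => u (t, y))}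
        ⊆ {y : Fin (N-1) → ℝ | ∃ t, (t, y) ∈ ω} := by
      intro y hy
      by_contra h
      simp only [Set.mem_setOf_eq] at h
      push_neg at h
      refine hy ?_
      have : Continuous (u ∘ (fun t : ℝ => ((t:ℝ), y))) :=
        hcont.comp_continuous (continuous_id.prodMk continuous_const) (fun t => h t)
      exact this
    calc volume {y : Fin (N-1) → ℝ | ¬ Continuous (fun t : ℝ => u (t, y))}
        ≤ volume {y : Fin (N-1) → ℝ | ∃ t, (t, y) ∈ ω} := measure_mono hsub
      _ ≤ K * δ ^ p := bad_set_bound (N-1) hp hC hCb hω hcap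
      _ ≤ K * ((ε : ℝ≥0∞) / K) := by gcongr
      _ = (ε : ℝ≥0∞) := ENNReal.mul_div_cancel hK0 hKtop
  have : volume {y : Fin (N-1) → ℝ | ¬ Continuous (fun t : ℝ => u (t, y))} ≤ 0 :=
    ENNReal.le_of_forall_pos_le_add fun ε hε _ => by simpa using main ε hε
  exact le_zero_iff.mp this
end
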